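/- arXiv:2211.11504 — 2 statements merged into one kernel-verified Lean document; each statement's English description precedes it below -/
import Mathlib

section
/- For all real s in the open interval (0,1), the binary entropy satisfies H(s^2) < 2s·H(s). -/
/-!
Expanding the logarithms gives `2 s H(s) - H(s²) = (1 - s) ((1 - s) log (1 - s) + (1 + s) log (1 + s))`,
and `x log x > x - 1` for `0 ≤ x ≠ 1`, applied at `x = 1 ∓ s`, makes the bracket positive.
-/

open Real Set

noncomputable def binEnt (p : ℝ) : ℝ := -p * Real.log p - (1 - p) * Real.log (1 - p)

theorem two_mul_binEnt_sub_binEnt_sq (s : ℝ) :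
    2 * s * binEnt s - binEnt (s ^ 2) =
      (1 - s) * ((1 - s) * log (1 - s) + (1 + s) * log (1 + s)) := by
  have hfac : 1 - s ^ 2 = (1 - s) * (1 + s) := by ring
  -- `log_mul` fails (junk `log 0 = 0`) only where the factor `1 - s ^ 2` vanishes.
  have hsplit : (1 - s ^ 2) * log (1 - s ^ 2) =
      (1 - s ^ 2) * (log (1 - s) + log (1 + s)) := by
    rw [hfac]
    rcases eq_or_ne (1 - s) 0 with hminus | hminus
    · simp [hminus]
    rcases eq_or_ne (1 + s) 0 with hplus | hplus
    · simp [hplus]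
    rw [log_mul hminus hplus]
  simp only [binEnt, log_pow]
  linear_combination hsplit

theorem stmt0 (s : ℝ) (hs : s ∈ Set.Ioo (0:ℝ) 1) :
    binEnt (s ^ 2) < 2 * s * binEnt s := by
  obtain ⟨hs0, hs1⟩ := hs
  have hminus := self_sub_one_lt_mul_log (x := 1 - s) (by linarith) (by linarith)
  have hplus := self_sub_one_lt_mul_log (x := 1 + s) (by linarith) (by linarith)
  have hpos : 0 < (1 - s) * ((1 - s) * log (1 - s) + (1 + s) * log (1 + s)) :=
    mul_pos (by linarith) (by linarith)
  linarith [two_mul_binEnt_sub_binEnt_sq s]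
end

section
/- The function s ↦ H(s^2)/(s·H(s)) on (0,1) attains its global minimum at s = (√5-1)/2, where its value is 2/(√5-1) = (√5+1)/2. -/
open Real Set

open scoped goldenRatio

/-!
With `u p = H p / p` the inequality reads `entropyGap s = u (s²) - φ u s ≥ 0`; it is an equality
at `s = φ⁻¹`, where `s² = 1 - s`, and at `s = 1`. Since `u' p = log (1 - p) / p²`, the derivative of
`entropyGap` has the sign of `N s = 2 log (1 - s²) - φ s log (1 - s)`, and `N''` has the sign of a
cubic. Propagating "changes sign at most once" up these levels from the cubic (using
`N 0 = N' 0 = N φ⁻¹ = 0` and `N' φ⁻¹ > 0`, which comes down to `φ³ > 4`) shows that `N ≤ 0` on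
`[0, φ⁻¹]` and that on `[φ⁻¹, 1)` the function `N` is first nonnegative, then nonpositive. So
`entropyGap` decreases to `0` on `(0, φ⁻¹]` and on `[φ⁻¹, 1]` it rises and then falls back to `0`.
-/

theorem binEnt_eq_binEntropy : binEnt = binEntropy := by
  funext p
  simp only [binEnt, binEntropy, log_inv]
  ring

def NonposAfterNegOn (f : ℝ → ℝ) (s : Set ℝ) : Prop :=
  ∀ ⦃x⦄, x ∈ s → ∀ ⦃y⦄, y ∈ s → x ≤ y → f x < 0 → f y ≤ 0

section NonposAfterNegOn

variable {f g f' : ℝ → ℝ} {s : Set ℝ} {a b : ℝ}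

theorem AntitoneOn.nonposAfterNegOn (h : AntitoneOn f s) : NonposAfterNegOn f s :=
  fun _ hx _ hy hxy hfx => (h hx hy hxy).trans hfx.le

theorem NonposAfterNegOn.mono {t : Set ℝ} (h : NonposAfterNegOn f t) (hst : s ⊆ t) :
    NonposAfterNegOn f s :=
  fun _ hx _ hy => h (hst hx) (hst hy)

theorem NonposAfterNegOn.div_of_pos (h : NonposAfterNegOn f s) (hg : ∀ x ∈ s, 0 < g x) :
    NonposAfterNegOn (fun x => f x / g x) s := by
  intro x hx y hy hxy hfx
  have hfx' : f x < 0 := by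
    by_contra! h0
    exact hfx.not_ge (div_nonneg h0 (hg x hx).le)
  exact div_nonpos_of_nonpos_of_nonneg (h hx hy hxy hfx') (hg y hy).le

-- `f a ≥ 0 > f x` forces `f' < 0` somewhere in `(a, x)`, hence `f' ≤ 0` on `(x, b)`.
theorem antitoneOn_Icc_of_neg (hf : ContinuousOn f (Icc a b))
    (hf' : ∀ t ∈ Ioo a b, HasDerivAt f (f' t) t) (h' : NonposAfterNegOn f' (Ioo a b))
    (ha : 0 ≤ f a) {x : ℝ} (hx : x ∈ Icc a b) (hfx : f x < 0) : AntitoneOn f (Icc x b) := by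
  obtain ⟨t, ht, hf't⟩ : ∃ t ∈ Ioo a x, f' t < 0 := by
    by_contra! hnonneg
    have hmono : MonotoneOn f (Icc a x) := by
      refine monotoneOn_of_hasDerivWithinAt_nonneg (f' := f') (convex_Icc a x)
        (hf.mono (Icc_subset_Icc_right hx.2)) (fun u hu => ?_) (fun u hu => ?_)
      · rw [interior_Icc] at hu ⊢
        exact (hf' u ⟨hu.1, hu.2.trans_le hx.2⟩).hasDerivWithinAt
      · rw [interior_Icc] at hu
        exact hnonneg u hu
    exact (hmono (left_mem_Icc.2 hx.1) (right_mem_Icc.2 hx.1) hx.1).not_gt (hfx.trans_le ha)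
  refine antitoneOn_of_hasDerivWithinAt_nonpos (f' := f') (convex_Icc x b)
    (hf.mono (Icc_subset_Icc_left hx.1)) (fun u hu => ?_) (fun u hu => ?_)
  · rw [interior_Icc] at hu ⊢
    exact (hf' u ⟨hx.1.trans_lt hu.1, hu.2⟩).hasDerivWithinAt
  · rw [interior_Icc] at hu
    exact h' ⟨ht.1, ht.2.trans_le hx.2⟩ ⟨hx.1.trans_lt hu.1, hu.2⟩
      (ht.2.le.trans hu.1.le) hf't

theorem nonneg_of_hasDerivAt_of_nonposAfterNegOn (hf : ContinuousOn f (Icc a b))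
    (hf' : ∀ t ∈ Ioo a b, HasDerivAt f (f' t) t) (h' : NonposAfterNegOn f' (Ioo a b))
    (ha : 0 ≤ f a) (hb : 0 ≤ f b) {x : ℝ} (hx : x ∈ Icc a b) : 0 ≤ f x := by
  by_contra! hfx
  have hanti := antitoneOn_Icc_of_neg hf hf' h' ha hx hfx
  exact (hanti (left_mem_Icc.2 hx.2) (right_mem_Icc.2 hx.2) hx.2).not_gt (hfx.trans_le hb)

theorem nonposAfterNegOn_Ico_of_hasDerivAt (hf' : ∀ t ∈ Ico a b, HasDerivAt f (f' t) t)
    (h' : NonposAfterNegOn f' (Ioo a b)) (ha : 0 ≤ f a) : NonposAfterNegOn f (Ico a b) := by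
  intro x hx y hy hxy hfx
  have hsub : Icc a y ⊆ Ico a b := Icc_subset_Ico_right hy.2
  have hanti := antitoneOn_Icc_of_neg
    (HasDerivAt.continuousOn fun t ht => hf' t (hsub ht))
    (fun t ht => hf' t (hsub (Ioo_subset_Icc_self ht))) (h'.mono (Ioo_subset_Ioo_right hy.2.le))
    ha ⟨hx.1, hxy⟩ hfx
  exact (hanti (left_mem_Icc.2 hxy) (right_mem_Icc.2 hxy) hxy).trans hfx.le

end NonposAfterNegOn

noncomputable def entropyGap (x : ℝ) : ℝ := binEntropy (x ^ 2) / x ^ 2 - φ * (binEntropy x / x)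

noncomputable def entropyGapNum (x : ℝ) : ℝ := 2 * log (1 - x ^ 2) - φ * x * log (1 - x)

noncomputable def entropyGapNumDeriv (x : ℝ) : ℝ :=
  -4 * x / (1 - x ^ 2) - φ * log (1 - x) + φ * x / (1 - x)

noncomputable def entropyGapCubic (x : ℝ) : ℝ := 2 * φ - 4 + 3 * φ * x - 4 * x ^ 2 - φ * x ^ 3

theorem hasDerivAt_binEntropy_div_self {p : ℝ} (hp₀ : p ≠ 0) (hp₁ : p ≠ 1) :
    HasDerivAt (fun p => binEntropy p / p) (log (1 - p) / p ^ 2) p := by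
  refine ((hasDerivAt_binEntropy hp₀ hp₁).div (hasDerivAt_id p) hp₀).congr_deriv ?_
  rw [binEntropy]
  simp only [log_inv, id]
  field_simp
  ring

theorem hasDerivAt_entropyGap {x : ℝ} (hx : x ∈ Ioo 0 1) :
    HasDerivAt entropyGap (entropyGapNum x / x ^ 3) x := by
  have hx₀ : x ≠ 0 := hx.1.ne'
  have hsq : HasDerivAt (fun x => binEntropy (x ^ 2) / x ^ 2)
      (log (1 - x ^ 2) / (x ^ 2) ^ 2 * (2 * x)) x := by
    have hpow : HasDerivAt (fun x : ℝ => x ^ 2) (2 * x) x := by simpa using hasDerivAt_pow 2 x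
    exact HasDerivAt.comp x (h₂ := fun p => binEntropy p / p)
      (hasDerivAt_binEntropy_div_self (pow_ne_zero 2 hx₀)
        (pow_lt_one₀ hx.1.le hx.2 two_ne_zero).ne) hpow
  refine (hsq.sub ((hasDerivAt_binEntropy_div_self hx₀ hx.2.ne).const_mul φ)).congr_deriv ?_
  rw [entropyGapNum]
  field_simp

theorem hasDerivAt_entropyGapNum {x : ℝ} (hx : x ∈ Ioo (-1) 1) :
    HasDerivAt entropyGapNum (entropyGapNumDeriv x) x := by
  have h₁ : 1 - x ≠ 0 := by linarith [hx.2]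
  have h₂ : 1 - x ^ 2 ≠ 0 := by nlinarith [hx.1, hx.2]
  have hlog₁ := ((hasDerivAt_id' x).const_sub 1).log h₁
  have hlog₂ := ((hasDerivAt_pow 2 x).const_sub 1).log h₂
  refine ((hlog₂.const_mul 2).sub (((hasDerivAt_id' x).const_mul φ).mul hlog₁)).congr_deriv ?_
  rw [entropyGapNumDeriv]
  simp only [Nat.cast_ofNat]
  field_simp
  ring

theorem hasDerivAt_entropyGapNumDeriv {x : ℝ} (hx : x ∈ Ioo (-1) 1) :
    HasDerivAt entropyGapNumDeriv (entropyGapCubic x / (1 - x ^ 2) ^ 2) x := by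
  have h₁ : 1 - x ≠ 0 := by linarith [hx.2]
  have h₂ : 1 - x ^ 2 ≠ 0 := by nlinarith [hx.1, hx.2]
  have hsub₁ := (hasDerivAt_id' x).const_sub 1
  have hsub₂ := (hasDerivAt_pow 2 x).const_sub 1
  refine (((((hasDerivAt_id' x).const_mul (-4)).div hsub₂ h₂).sub
    ((hsub₁.log h₁).const_mul φ)).add
      (((hasDerivAt_id' x).const_mul φ).div hsub₁ h₁)).congr_deriv ?_
  rw [entropyGapCubic]
  simp only [Nat.cast_ofNat]
  field_simp
  ring

theorem hasDerivAt_entropyGapCubic (x : ℝ) :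
    HasDerivAt entropyGapCubic (3 * φ - 8 * x - 3 * φ * x ^ 2) x := by
  refine (((((hasDerivAt_id' x).const_mul (3 * φ)).const_add (2 * φ - 4)).sub
    ((hasDerivAt_pow 2 x).const_mul 4)).sub ((hasDerivAt_pow 3 x).const_mul φ)).congr_deriv ?_
  simp only [Nat.cast_ofNat]
  ring

theorem continuousOn_entropyGap : ContinuousOn entropyGap (Ioi 0) := by
  have hH := binEntropy_continuous
  exact (((hH.comp (continuous_pow 2)).continuousOn.div (continuous_pow 2).continuousOn
    fun x hx => pow_ne_zero 2 (ne_of_gt hx)).sub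
      (continuousOn_const.mul (hH.continuousOn.div continuousOn_id fun x hx => ne_of_gt hx)))

theorem one_sub_inv_goldenRatio : 1 - φ⁻¹ = φ⁻¹ ^ 2 := by
  rw [inv_goldenRatio, neg_sq, goldenConj_sq]
  ring

theorem one_sub_inv_goldenRatio_sq : 1 - φ⁻¹ ^ 2 = φ⁻¹ := by
  rw [← one_sub_inv_goldenRatio]
  ring

theorem inv_goldenRatio_eq_sub_one : φ⁻¹ = φ - 1 := by
  rw [inv_goldenRatio, ← one_sub_goldenConj]
  ring

theorem inv_goldenRatio_mem_Ioo : φ⁻¹ ∈ Ioo (0 : ℝ) 1 :=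
  ⟨inv_pos.2 goldenRatio_pos, inv_lt_one_of_one_lt₀ one_lt_goldenRatio⟩

theorem eight_fifths_lt_goldenRatio : (8 : ℝ) / 5 < φ := by
  have : (11 : ℝ) / 5 < √5 := by rw [Real.lt_sqrt] <;> norm_num
  rw [goldenRatio]
  linarith

theorem two_thirds_log_two_lt_log_goldenRatio : 2 / 3 * log 2 < log φ := by
  have hcube : (4 : ℝ) < φ ^ 3 := by
    nlinarith [goldenRatio_sq, eight_fifths_lt_goldenRatio]
  have := log_lt_log (by norm_num) hcube
  rw [log_pow, show (4 : ℝ) = 2 ^ 2 by norm_num, log_pow] at this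
  push_cast at this
  linarith

theorem entropyGap_inv_goldenRatio : entropyGap φ⁻¹ = 0 := by
  rw [entropyGap, ← one_sub_inv_goldenRatio, binEntropy_one_sub, one_sub_inv_goldenRatio]
  field_simp
  ring

theorem entropyGap_one : entropyGap 1 = 0 := by
  simp [entropyGap]

theorem entropyGapNum_inv_goldenRatio : entropyGapNum φ⁻¹ = 0 := by
  rw [entropyGapNum, one_sub_inv_goldenRatio_sq, one_sub_inv_goldenRatio, log_pow,
    mul_inv_cancel₀ goldenRatio_ne_zero]
  ring

theorem entropyGapNumDeriv_inv_goldenRatio_pos : 0 < entropyGapNumDeriv φ⁻¹ := by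
  have hval : entropyGapNumDeriv φ⁻¹ = φ ^ 2 - 4 + 2 * φ * log φ := by
    rw [entropyGapNumDeriv, one_sub_inv_goldenRatio_sq, one_sub_inv_goldenRatio, log_pow,
      log_inv]
    field_simp
    ring
  rw [hval]
  nlinarith [goldenRatio_sq, eight_fifths_lt_goldenRatio, log_two_gt_d9,
    two_thirds_log_two_lt_log_goldenRatio]

theorem entropyGapCubic_inv_goldenRatio_pos : 0 < entropyGapCubic φ⁻¹ := by
  have hφx : φ * φ⁻¹ = 1 := mul_inv_cancel₀ goldenRatio_ne_zero
  have hval : entropyGapCubic φ⁻¹ = 2 * φ - 6 + 5 * φ⁻¹ := by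
    rw [entropyGapCubic]
    linear_combination (3 - φ⁻¹ ^ 2) * hφx + 5 * one_sub_inv_goldenRatio
  rw [hval, inv_goldenRatio_eq_sub_one]
  linarith [eight_fifths_lt_goldenRatio]

theorem entropyGapCubic_antitoneOn : AntitoneOn entropyGapCubic (Ici φ⁻¹) := by
  refine antitoneOn_of_hasDerivWithinAt_nonpos (convex_Ici _)
    (HasDerivAt.continuousOn fun x _ => hasDerivAt_entropyGapCubic x)
    (fun x _ => (hasDerivAt_entropyGapCubic x).hasDerivWithinAt) fun x hx => ?_
  rw [interior_Ici, mem_Ioi, inv_goldenRatio_eq_sub_one] at hx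
  nlinarith [goldenRatio_sq, eight_fifths_lt_goldenRatio]

theorem nonposAfterNegOn_entropyGapNumDeriv :
    NonposAfterNegOn entropyGapNumDeriv (Ico φ⁻¹ 1) := by
  have hmem : ∀ x ∈ Ico φ⁻¹ 1, x ∈ Ioo (-1) 1 := fun x hx =>
    ⟨by linarith [hx.1, inv_goldenRatio_mem_Ioo.1], hx.2⟩
  refine nonposAfterNegOn_Ico_of_hasDerivAt
    (fun x hx => hasDerivAt_entropyGapNumDeriv (hmem x hx))
    ((entropyGapCubic_antitoneOn.nonposAfterNegOn.mono fun _ hx => hx.1.le).div_of_pos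
      fun x hx => ?_) entropyGapNumDeriv_inv_goldenRatio_pos.le
  have := hmem x (Ioo_subset_Ico_self hx)
  exact pow_pos (by nlinarith [this.1, this.2]) 2

theorem nonposAfterNegOn_entropyGapNum : NonposAfterNegOn entropyGapNum (Ico φ⁻¹ 1) :=
  nonposAfterNegOn_Ico_of_hasDerivAt
    (fun x hx => hasDerivAt_entropyGapNum ⟨by linarith [hx.1, inv_goldenRatio_mem_Ioo.1], hx.2⟩)
    (nonposAfterNegOn_entropyGapNumDeriv.mono Ioo_subset_Ico_self)
    entropyGapNum_inv_goldenRatio.ge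

theorem entropyGap_nonneg_of_inv_goldenRatio_le {s : ℝ} (hs : s ∈ Icc φ⁻¹ 1) :
    0 ≤ entropyGap s := by
  have hpos : ∀ x ∈ Icc φ⁻¹ 1, 0 < x := fun x hx => inv_goldenRatio_mem_Ioo.1.trans_le hx.1
  exact nonneg_of_hasDerivAt_of_nonposAfterNegOn
    (continuousOn_entropyGap.mono hpos)
    (fun x hx => hasDerivAt_entropyGap ⟨hpos x (Ioo_subset_Icc_self hx), hx.2⟩)
    ((nonposAfterNegOn_entropyGapNum.mono Ioo_subset_Ico_self).div_of_pos
      fun x hx => pow_pos (hpos x (Ioo_subset_Icc_self hx)) 3)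
    entropyGap_inv_goldenRatio.ge entropyGap_one.ge hs

theorem nonposAfterNegOn_neg_entropyGapCubic :
    NonposAfterNegOn (fun x => -entropyGapCubic x) (Icc 0 φ⁻¹) := by
  intro x hx y hy hxy hPx
  have hderiv_anti : AntitoneOn (fun t => 3 * φ - 8 * t - 3 * φ * t ^ 2) (Ioo x φ⁻¹) :=
    fun a ha b hb hab => by
      have hab' : 0 ≤ (b - a) * (a + b) := mul_nonneg (by linarith) (by linarith [hx.1, ha.1, hb.1])
      nlinarith [mul_nonneg hab' goldenRatio_pos.le]
  have := nonneg_of_hasDerivAt_of_nonposAfterNegOn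
    (HasDerivAt.continuousOn fun t _ => hasDerivAt_entropyGapCubic t)
    (fun t _ => hasDerivAt_entropyGapCubic t) hderiv_anti.nonposAfterNegOn
    (neg_neg_iff_pos.1 hPx).le entropyGapCubic_inv_goldenRatio_pos.le ⟨hxy, hy.2⟩
  exact neg_nonpos.2 this

theorem nonposAfterNegOn_neg_entropyGapNumDeriv :
    NonposAfterNegOn (fun x => -entropyGapNumDeriv x) (Ico 0 φ⁻¹) := by
  have hmem : ∀ x ∈ Ico 0 φ⁻¹, x ∈ Ioo (-1) 1 := fun x hx =>
    ⟨by linarith [hx.1], hx.2.trans inv_goldenRatio_mem_Ioo.2⟩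
  refine nonposAfterNegOn_Ico_of_hasDerivAt (f' := fun x => -entropyGapCubic x / (1 - x ^ 2) ^ 2)
    (fun x hx => ((hasDerivAt_entropyGapNumDeriv (hmem x hx)).neg).congr_deriv (neg_div _ _).symm)
    ((nonposAfterNegOn_neg_entropyGapCubic.mono Ioo_subset_Icc_self).div_of_pos
      fun x hx => ?_) (by simp [entropyGapNumDeriv])
  have := hmem x (Ioo_subset_Ico_self hx)
  exact pow_pos (by nlinarith [this.1, this.2]) 2

theorem entropyGapNum_nonpos {x : ℝ} (hx : x ∈ Icc 0 φ⁻¹) : entropyGapNum x ≤ 0 := by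
  have hmem : ∀ x ∈ Icc 0 φ⁻¹, x ∈ Ioo (-1) 1 := fun x hx =>
    ⟨by linarith [hx.1], hx.2.trans_lt inv_goldenRatio_mem_Ioo.2⟩
  have := nonneg_of_hasDerivAt_of_nonposAfterNegOn (f := fun x => -entropyGapNum x)
    (HasDerivAt.continuousOn fun t ht => (hasDerivAt_entropyGapNum (hmem t ht)).neg)
    (fun t ht => (hasDerivAt_entropyGapNum (hmem t (Ioo_subset_Icc_self ht))).neg)
    (nonposAfterNegOn_neg_entropyGapNumDeriv.mono Ioo_subset_Ico_self)
    (by simp [entropyGapNum]) (by simp only [entropyGapNum_inv_goldenRatio, neg_zero, le_refl]) hx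
  exact neg_nonneg.1 this

theorem entropyGap_nonneg_of_le_inv_goldenRatio {s : ℝ} (hs : s ∈ Ioc 0 φ⁻¹) :
    0 ≤ entropyGap s := by
  have hpos : ∀ x ∈ Icc s φ⁻¹, 0 < x := fun x hx => hs.1.trans_le hx.1
  have hanti : AntitoneOn entropyGap (Icc s φ⁻¹) := by
    refine antitoneOn_of_hasDerivWithinAt_nonpos (f' := fun x => entropyGapNum x / x ^ 3)
      (convex_Icc _ _) (continuousOn_entropyGap.mono hpos) (fun x hx => ?_) fun x hx => ?_
    all_goals rw [interior_Icc] at hx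
    · exact (hasDerivAt_entropyGap
        ⟨hpos x (Ioo_subset_Icc_self hx), hx.2.trans inv_goldenRatio_mem_Ioo.2⟩).hasDerivWithinAt
    · exact div_nonpos_of_nonpos_of_nonneg (entropyGapNum_nonpos ⟨hs.1.le.trans hx.1.le, hx.2.le⟩)
        (pow_pos (hpos x (Ioo_subset_Icc_self hx)) 3).le
  have := hanti (left_mem_Icc.2 hs.2) (right_mem_Icc.2 hs.2) hs.2
  rwa [entropyGap_inv_goldenRatio] at this

theorem entropyGap_nonneg {s : ℝ} (hs : s ∈ Ioo 0 1) : 0 ≤ entropyGap s := by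
  rcases le_total s φ⁻¹ with h | h
  · exact entropyGap_nonneg_of_le_inv_goldenRatio ⟨hs.1, h⟩
  · exact entropyGap_nonneg_of_inv_goldenRatio_le ⟨h, hs.2.le⟩

theorem goldenRatio_le_binEntropy_sq_div {s : ℝ} (hs : s ∈ Ioo 0 1) :
    φ ≤ binEntropy (s ^ 2) / (s * binEntropy s) := by
  have hH := binEntropy_pos hs.1 hs.2
  have hgap := entropyGap_nonneg hs
  rw [entropyGap, sub_nonneg] at hgap
  rw [le_div_iff₀ (mul_pos hs.1 hH)]
  have hs₀ := hs.1.ne'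
  calc φ * (s * binEntropy s) = φ * (binEntropy s / s) * s ^ 2 := by field_simp
    _ ≤ binEntropy (s ^ 2) / s ^ 2 * s ^ 2 := by gcongr
    _ = binEntropy (s ^ 2) := div_mul_cancel₀ _ (pow_ne_zero 2 hs₀)

theorem binEntropy_sq_div_inv_goldenRatio :
    binEntropy (φ⁻¹ ^ 2) / (φ⁻¹ * binEntropy φ⁻¹) = φ := by
  have hH := (binEntropy_pos inv_goldenRatio_mem_Ioo.1 inv_goldenRatio_mem_Ioo.2).ne'
  rw [← one_sub_inv_goldenRatio, binEntropy_one_sub, div_mul_cancel_right₀ hH, inv_inv]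

theorem stmt8 :
    (∀ s ∈ Set.Ioo (0:ℝ) 1,
      binEnt (((Real.sqrt 5 - 1) / 2) ^ 2) / (((Real.sqrt 5 - 1) / 2) * binEnt ((Real.sqrt 5 - 1) / 2))
        ≤ binEnt (s ^ 2) / (s * binEnt s)) ∧
    binEnt (((Real.sqrt 5 - 1) / 2) ^ 2) / (((Real.sqrt 5 - 1) / 2) * binEnt ((Real.sqrt 5 - 1) / 2))
      = (Real.sqrt 5 + 1) / 2 := by
  have hinv : (√5 - 1) / 2 = φ⁻¹ := by
    rw [inv_goldenRatio]
    ring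
  have hφ : (√5 + 1) / 2 = φ := by ring
  rw [binEnt_eq_binEntropy, hinv, hφ, binEntropy_sq_div_inv_goldenRatio]
  exact ⟨fun s hs => goldenRatio_le_binEntropy_sq_div hs, rfl⟩
end
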